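/- For positive integers $m$ and $k$, $\sum_{n=1}^{\infty} \frac{\zeta_n(m)}{n(n+k)} = \frac{1}{k}\left\{ \zeta(m+1) + \sum_{j=1}^{m-1} (-1)^{j-1}\zeta(m+1-j)\,\zeta_{k-1}(j) + (-1)^{m-1}\sum_{i=1}^{k-1} \frac{H_i}{i^m} \right\}$. -/

import Mathlib

noncomputable def H (n : ℕ) : ℝ := ∑ j ∈ Finset.Icc 1 n, (1 : ℝ) / j

noncomputable def zh (m n : ℕ) : ℝ := ∑ j ∈ Finset.Icc 1 n, (1 : ℝ) / (j : ℝ) ^ m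

noncomputable def Z (s : ℕ) : ℝ := ∑' n : ℕ, 1 / ((n : ℝ) + 1) ^ s

/-!
Expand `ζ_n(m) = ∑_{j ≤ n} j⁻ᵐ` and exchange the order of summation (all terms are nonnegative).
The tail `∑_{n ≥ j} 1 / (n (n + k))` telescopes to `(1/k) ∑_{d < k} 1 / (j + d)`, so the series
is `(1/k) ∑_{d < k} V(m, d)` with `V(m, d) = ∑_{n ≥ 1} 1 / (nᵐ (n + d))` (`shiftZeta m d`).
Here `V(m, 0) = ζ(m + 1)`, and for `d ≥ 1` partial fractions give `V(1, d) = H_d / d` and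
`V(m + 1, d) = (ζ(m + 1) - V(m, d)) / d`, which unrolls to an alternating sum of the
`ζ(m + 1 - j) / dʲ`; summing over `d` produces the `ζ_{k-1}(j)` and `H_i / iᵐ` terms.
-/

open Finset Filter Topology

lemma Finset.sum_Icc_one_eq_sum_range {M : Type*} [AddCommMonoid M] (f : ℕ → M) (n : ℕ) :
    ∑ i ∈ Icc 1 n, f i = ∑ i ∈ range n, f (i + 1) := by
  rw [← Ico_add_one_right_eq_Icc, sum_Ico_eq_sum_range]
  simp only [Nat.add_sub_cancel, add_comm 1]

lemma zh_eq_sum_range (m n : ℕ) : zh m n = ∑ j ∈ range n, 1 / ((j : ℝ) + 1) ^ m := by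
  simp [zh, sum_Icc_one_eq_sum_range]

lemma H_eq_sum_range (n : ℕ) : H n = ∑ j ∈ range n, 1 / ((j : ℝ) + 1) := by
  simp [H, sum_Icc_one_eq_sum_range]

lemma Antitone.hasSum_sub_succ {g : ℕ → ℝ} (hg : Antitone g) (hg0 : Tendsto g atTop (𝓝 0)) :
    HasSum (fun n => g n - g (n + 1)) (g 0) := by
  rw [hasSum_iff_tendsto_nat_of_nonneg fun n => sub_nonneg.2 (hg n.le_succ)]
  simp_rw [sum_range_sub']
  simpa using tendsto_const_nhds.sub hg0

lemma Antitone.hasSum_sub_add {g : ℕ → ℝ} (hg : Antitone g) (hg0 : Tendsto g atTop (𝓝 0))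
    (K : ℕ) : HasSum (fun n => g n - g (n + K)) (∑ d ∈ range K, g d) := by
  have hstep (d : ℕ) : HasSum (fun n => g (n + d) - g (n + d + 1)) (g d) := by
    simpa [add_right_comm] using (hg.comp_monotone (add_left_mono (a := d))).hasSum_sub_succ
      (hg0.comp (tendsto_add_atTop_nat d))
  refine (hasSum_sum fun d _ => hstep d).congr_fun fun n => ?_
  simpa [add_assoc] using (sum_range_sub' (fun d => g (n + d)) K).symm

lemma hasSum_one_div_mul_add {c : ℝ} (hc : 0 < c) {K : ℕ} (hK : 0 < K) :
    HasSum (fun n : ℕ => 1 / ((n + c) * (n + c + K))) (1 / K * ∑ d ∈ range K, 1 / (d + c)) := by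
  have hg : Antitone fun n : ℕ => 1 / ((n : ℝ) + c) := fun a b hab => by
    dsimp only
    gcongr
  have hg0 : Tendsto (fun n : ℕ => 1 / ((n : ℝ) + c)) atTop (𝓝 0) := by
    simp only [one_div]
    exact (tendsto_atTop_add_const_right _ c tendsto_natCast_atTop_atTop).inv_tendsto_atTop
  refine ((hg.hasSum_sub_add hg0 K).mul_left ((1 : ℝ) / K)).congr_fun fun n => ?_
  have hn : (0 : ℝ) < n + c := by positivity
  field_simp
  push_cast
  ring

lemma summable_one_div_succ_pow {s : ℕ} (hs : 2 ≤ s) :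
    Summable fun n : ℕ => 1 / ((n : ℝ) + 1) ^ s := by
  simpa using (summable_nat_add_iff 1).mpr (Real.summable_one_div_nat_pow.mpr hs)

noncomputable def shiftZeta (m d : ℕ) : ℝ := ∑' n : ℕ, 1 / (((n : ℝ) + 1) ^ m * ((n : ℝ) + 1 + d))

lemma summable_shiftZeta {m : ℕ} (hm : 0 < m) (d : ℕ) :
    Summable fun n : ℕ => 1 / (((n : ℝ) + 1) ^ m * ((n : ℝ) + 1 + d)) := by
  refine (summable_one_div_succ_pow (s := m + 1) (by omega)).of_nonneg_of_le
    (fun n => by positivity) fun n => ?_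
  rw [pow_succ]
  gcongr 1 / (_ * ?_)
  linarith [(d.cast_nonneg : (0 : ℝ) ≤ d)]

lemma shiftZeta_zero (m : ℕ) : shiftZeta m 0 = Z (m + 1) := by
  simp [shiftZeta, Z, pow_succ]

lemma shiftZeta_one {d : ℕ} (hd : 0 < d) : shiftZeta 1 d = H d / d := by
  rw [shiftZeta, H_eq_sum_range, ((hasSum_one_div_mul_add one_pos hd).congr_fun fun n => by
    rw [pow_one]).tsum_eq]
  ring

lemma shiftZeta_succ {m d : ℕ} (hm : 0 < m) (hd : 0 < d) :
    shiftZeta (m + 1) d = (Z (m + 1) - shiftZeta m d) / d := by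
  have hfrac (n : ℕ) : 1 / (((n : ℝ) + 1) ^ (m + 1) * ((n : ℝ) + 1 + d)) =
      (1 / ((n : ℝ) + 1) ^ (m + 1) - 1 / (((n : ℝ) + 1) ^ m * ((n : ℝ) + 1 + d))) / d := by
    field_simp
    ring
  rw [shiftZeta, tsum_congr hfrac, tsum_div_const,
    (summable_one_div_succ_pow (by omega)).tsum_sub (summable_shiftZeta hm d), Z, shiftZeta]

lemma shiftZeta_succ_eq {d : ℕ} (hd : 0 < d) (m : ℕ) :
    shiftZeta (m + 1) d = ∑ j ∈ range m, (-1) ^ j * Z (m + 1 - j) / (d : ℝ) ^ (j + 1) +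
      (-1) ^ m * H d / (d : ℝ) ^ (m + 1) := by
  induction m with
  | zero => simp [shiftZeta_one hd]
  | succ m ih =>
    have hshift : ∑ j ∈ range m, (-1) ^ (j + 1) * Z (m + 1 - j) / (d : ℝ) ^ (j + 1 + 1) =
        -(∑ j ∈ range m, (-1) ^ j * Z (m + 1 - j) / (d : ℝ) ^ (j + 1)) / d := by
      rw [neg_div, sum_div, ← sum_neg_distrib]
      exact sum_congr rfl fun j _ => by ring
    rw [shiftZeta_succ (by omega : 0 < m + 1) hd, ih, sum_range_succ']
    simp only [Nat.add_sub_add_right, Nat.sub_zero, hshift]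
    ring

lemma tsum_sum_range_succ_mul_eq {f g : ℕ → ℝ} (hf : 0 ≤ f) (hg : 0 ≤ g) (hg_sum : Summable g)
    (hrow : Summable fun j => f j * ∑' n, g (n + j)) :
    ∑' n, (∑ j ∈ range (n + 1), f j) * g n = ∑' j, f j * ∑' n, g (n + j) := by
  set a : ℕ → ℕ → ℝ := fun j n => if j ≤ n then f j * g n else 0 with ha
  have ha_nonneg (j n : ℕ) : 0 ≤ a j n := by
    simp only [ha]
    split_ifs
    exacts [mul_nonneg (hf j) (hg n), le_rfl]
  have ha_row (j : ℕ) : Summable (a j) :=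
    (hg_sum.mul_left (f j)).of_nonneg_of_le (ha_nonneg j) fun n => by
      simp only [ha]
      split_ifs
      exacts [le_rfl, mul_nonneg (hf j) (hg n)]
  have ha_row_eq (j : ℕ) : ∑' n, a j n = f j * ∑' n, g (n + j) := by
    rw [← (ha_row j).sum_add_tsum_nat_add j, sum_eq_zero fun n hn => if_neg (by simpa using hn),
      zero_add, ← tsum_mul_left]
    exact tsum_congr fun n => if_pos (Nat.le_add_left j n)
  have ha_col_vanish (n j : ℕ) (hj : j ∉ range (n + 1)) : a j n = 0 :=
    if_neg (by simpa [Nat.lt_succ_iff] using hj)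
  have ha_col_eq (n : ℕ) : ∑' j, a j n = (∑ j ∈ range (n + 1), f j) * g n := by
    rw [tsum_eq_sum (ha_col_vanish n), sum_mul]
    exact sum_congr rfl fun j hj => if_pos (by simpa [Nat.lt_succ_iff] using hj)
  have ha_summable : Summable (Function.uncurry a) :=
    (summable_prod_of_nonneg fun p => ha_nonneg p.1 p.2).2
      ⟨ha_row, by simpa only [Function.uncurry_apply_pair, ha_row_eq] using hrow⟩
  calc ∑' n, (∑ j ∈ range (n + 1), f j) * g n = ∑' n, ∑' j, a j n :=
        tsum_congr fun n => (ha_col_eq n).symm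
    _ = ∑' j, ∑' n, a j n :=
        ha_summable.tsum_comm' ha_row fun n => summable_of_ne_finset_zero (ha_col_vanish n)
    _ = ∑' j, f j * ∑' n, g (n + j) := tsum_congr ha_row_eq

lemma tsum_zh_div_mul_add {m k : ℕ} (hm : 0 < m) (hk : 0 < k) :
    ∑' n : ℕ, zh m (n + 1) / (((n : ℝ) + 1) * ((n : ℝ) + 1 + k)) =
      1 / k * ∑ d ∈ range k, shiftZeta m d := by
  set f : ℕ → ℝ := fun j => 1 / ((j : ℝ) + 1) ^ m
  set g : ℕ → ℝ := fun n => 1 / (((n : ℝ) + 1) * ((n : ℝ) + 1 + k))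
  have hg_sum : Summable g := by simpa only [g, pow_one] using summable_shiftZeta one_pos k
  have hrow (j : ℕ) : f j * ∑' n, g (n + j) =
      1 / k * ∑ d ∈ range k, 1 / (((j : ℝ) + 1) ^ m * ((j : ℝ) + 1 + d)) := by
    have hshift : (fun n => g (n + j)) =
        fun n : ℕ => 1 / ((n + ((j : ℝ) + 1)) * (n + ((j : ℝ) + 1) + k)) := by
      ext n
      simp only [g]
      push_cast
      ring_nf
    rw [hshift, (hasSum_one_div_mul_add (by positivity) hk).tsum_eq, mul_sum, mul_sum, mul_sum]
    refine sum_congr rfl fun d _ => ?_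
    simp only [f]
    field_simp
    ring
  calc ∑' n : ℕ, zh m (n + 1) / (((n : ℝ) + 1) * ((n : ℝ) + 1 + k))
      = ∑' n, (∑ j ∈ range (n + 1), f j) * g n :=
        tsum_congr fun n => by rw [zh_eq_sum_range, div_eq_mul_one_div]
    _ = ∑' j, f j * ∑' n, g (n + j) :=
        tsum_sum_range_succ_mul_eq (fun j => by positivity) (fun n => by positivity) hg_sum
          (by simpa only [hrow] using (summable_sum fun d _ => summable_shiftZeta hm d).mul_left _)
    _ = 1 / k * ∑ d ∈ range k, shiftZeta m d := by
      rw [tsum_congr hrow, tsum_mul_left,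
        Summable.tsum_finsetSum fun d _ => summable_shiftZeta hm d]
      rfl

lemma sum_range_succ_shiftZeta_succ (M K : ℕ) :
    ∑ d ∈ range (K + 1), shiftZeta (M + 1) d =
      Z (M + 1 + 1) + ∑ j ∈ range M, (-1) ^ j * Z (M + 1 - j) * zh (j + 1) K +
        (-1) ^ M * ∑ i ∈ Icc 1 K, H i / (i : ℝ) ^ (M + 1) := by
  rw [sum_range_succ', shiftZeta_zero, sum_Icc_one_eq_sum_range]
  simp_rw [shiftZeta_succ_eq (Nat.add_one_pos _), zh_eq_sum_range, sum_add_distrib, mul_sum]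
  rw [sum_comm]
  push_cast
  simp only [mul_one_div, mul_div_assoc]
  ring

theorem stmt1 (m k : ℕ) (hm : 0 < m) (hk : 0 < k) :
    ∑' n : ℕ, zh m (n + 1) / (((n : ℝ) + 1) * ((n : ℝ) + 1 + k)) =
      (1 / (k : ℝ)) *
        (Z (m + 1) +
          ∑ j ∈ Finset.Icc 1 (m - 1), (-1 : ℝ) ^ (j - 1) * Z (m + 1 - j) * zh j (k - 1) +
          (-1 : ℝ) ^ (m - 1) * ∑ i ∈ Finset.Icc 1 (k - 1), H i / (i : ℝ) ^ m) := by
  obtain ⟨M, rfl⟩ : ∃ M, m = M + 1 := ⟨m - 1, by omega⟩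
  obtain ⟨K, rfl⟩ : ∃ K, k = K + 1 := ⟨k - 1, by omega⟩
  rw [tsum_zh_div_mul_add hm hk, sum_range_succ_shiftZeta_succ]
  simp only [Nat.add_sub_cancel, sum_Icc_one_eq_sum_range (n := M), Nat.add_sub_add_right]
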